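/- Neyman orthogonality in the propensity direction: d/dr |_{r=0} E[ Ψ(θ, η*, π* + r δ_π) ] = 0 for any bounded measurable perturbation δ_π = (δ_{π1}, δ_{π2}) such that π* + r δ_π stays bounded away from 0 for small r, where η* are the true iterated conditional means. -/

import Mathlib

/-!
For `|r| < r0` the integrand is `S0` plus, for every treatment history `(b1, b2)`, the residuals
`1{A1 = b1} (η2* - η1*)` and `1{A1 = b1, A2 = b2} (Y - η2*)` times weights built from the
perturbed propensities. By the defining properties of `η1*` and `η2*` these residuals have
conditional mean zero given `Z1`, resp. `(Z1, Z2)`, while the weights are bounded and measurable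
for these σ-algebras, because the true propensities are. So every correction term integrates to
zero: `r ↦ E[Ψ]` is constant near `0`, not merely stationary.
-/

open MeasureTheory Filter

/-- Indicator (as a real-valued function) of the event `A = a`. -/
noncomputable def ind {Ω : Type*} (A : Ω → Bool) (a : Bool) : Ω → ℝ :=
  fun ω => if A ω = a then 1 else 0

section Indicator

variable {Ω : Type*}

lemma norm_ind_le_one (A : Ω → Bool) (a : Bool) (ω : Ω) : ‖ind A a ω‖ ≤ 1 := by
  unfold ind; split <;> simp

lemma measurable_ind [MeasurableSpace Ω] {A : Ω → Bool} (hA : Measurable A) (a : Bool) :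
    Measurable (ind A a) :=
  Measurable.ite (hA (measurableSet_singleton a)) measurable_const measurable_const

lemma norm_ind_mul_ind_le_one (A B : Ω → Bool) (a b : Bool) (ω : Ω) :
    ‖ind A a ω * ind B b ω‖ ≤ 1 := by
  simpa using norm_mul_le_of_le (norm_ind_le_one A a ω) (norm_ind_le_one B b ω)

lemma sum_correction_eq_sum_ind (A1 A2 : Ω → Bool) (Y : Ω → ℝ) (d : Bool → Bool → ℝ)
    (p1 : Bool → Ω → ℝ) (p2 η1 η2 : Bool → Bool → Ω → ℝ) (ω : Ω) :
    (∑ b2 : Bool, d (A1 ω) b2 / p1 (A1 ω) ω * (η2 (A1 ω) b2 ω - η1 (A1 ω) b2 ω))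
        + d (A1 ω) (A2 ω) / (p1 (A1 ω) ω * p2 (A1 ω) (A2 ω) ω) * (Y ω - η2 (A1 ω) (A2 ω) ω)
      = ∑ b1 : Bool, ∑ b2 : Bool,
          (ind A1 b1 ω * (d b1 b2 / p1 b1 ω * (η2 b1 b2 ω - η1 b1 b2 ω))
            + ind A1 b1 ω * ind A2 b2 ω * (d b1 b2 / (p1 b1 ω * p2 b1 b2 ω) * (Y ω - η2 b1 b2 ω))) := by
  cases h1 : A1 ω <;> cases h2 : A2 ω <;> simp [ind, h1, h2] <;> ring

end Indicator

lemma norm_div_le_norm_div_of_le {c x ε : ℝ} (hε : 0 < ε) (hx : ε ≤ x) : ‖c / x‖ ≤ ‖c‖ / ε := by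
  rw [norm_div, Real.norm_of_nonneg (hε.le.trans hx)]
  exact div_le_div_of_nonneg_left (norm_nonneg c) hε hx

lemma norm_div_mul_le_norm_div_of_le {c x y ε : ℝ} (hε : 0 < ε) (hx : ε ≤ x) (hy : ε ≤ y) :
    ‖c / (x * y)‖ ≤ ‖c‖ / (ε * ε) :=
  norm_div_le_norm_div_of_le (mul_pos hε hε) (mul_le_mul hx hy hε.le (hε.le.trans hx))

section Centered

variable {Ω : Type*} {m m0 : MeasurableSpace Ω} {μ : Measure Ω}

def IsCentered (f : Ω → ℝ) (μ : Measure Ω) : Prop :=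
  Integrable f μ ∧ ∫ ω, f ω ∂μ = 0

lemma IsCentered.add {f g : Ω → ℝ} (hf : IsCentered f μ) (hg : IsCentered g μ) :
    IsCentered (fun ω => f ω + g ω) μ :=
  ⟨hf.1.add hg.1, by rw [integral_add hf.1 hg.1, hf.2, hg.2, add_zero]⟩

lemma IsCentered.sum {ι : Type*} (s : Finset ι) {f : ι → Ω → ℝ}
    (hf : ∀ i ∈ s, IsCentered (f i) μ) : IsCentered (fun ω => ∑ i ∈ s, f i ω) μ :=
  ⟨integrable_finsetSum s fun i hi => (hf i hi).1, by
    rw [integral_finsetSum s fun i hi => (hf i hi).1]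
    exact Finset.sum_eq_zero fun i hi => (hf i hi).2⟩

/-- No integrability of `f` is needed: otherwise both sides are the junk value `0`. -/
lemma integral_add_isCentered (f : Ω → ℝ) {g : Ω → ℝ} (hg : IsCentered g μ) :
    ∫ ω, f ω + g ω ∂μ = ∫ ω, f ω ∂μ := by
  by_cases hf : Integrable f μ
  · rw [integral_add hf hg.1, hg.2, add_zero]
  · rw [integral_undef hf, integral_undef fun hfg => hf ?_]
    exact (hfg.sub hg.1).congr (Eventually.of_forall fun ω => by simp)

lemma aestronglyMeasurable_of_ae_eq_condExp {f g : Ω → ℝ} (h : f =ᵐ[μ] μ[g|m]) :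
    AEStronglyMeasurable[m] f μ :=
  stronglyMeasurable_condExp.aestronglyMeasurable.congr h.symm

lemma MeasureTheory.AEStronglyMeasurable.of_mul_left {p q : Ω → ℝ} (hp : AEStronglyMeasurable[m] p μ)
    (hpq : AEStronglyMeasurable[m] (p * q) μ) (hp0 : ∀ᵐ ω ∂μ, p ω ≠ 0) :
    AEStronglyMeasurable[m] q μ :=
  (hpq.div₀ hp).congr <| by
    filter_upwards [hp0] with ω hω
    exact mul_div_cancel_left₀ (q ω) hω

/-- With `p = μ[I | m]`, the hypothesis `p W = μ[I V | m]` says that `W` is the regression of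
`V` on `m` within the event weighted by `I`. -/
lemma condExp_mul_sub_eq_zero [IsFiniteMeasure μ] (hm : m ≤ m0) {I V W p : Ω → ℝ} {B : ℝ}
    (hI : Integrable I μ) (hIV : Integrable (I * V) μ)
    (hW : AEStronglyMeasurable[m] W μ) (hWB : ∀ᵐ ω ∂μ, ‖W ω‖ ≤ B)
    (hp : p =ᵐ[μ] μ[I|m]) (hpW : p * W =ᵐ[μ] μ[I * V|m]) :
    μ[I * (V - W)|m] =ᵐ[μ] 0 := by
  have hWI : Integrable (W * I) μ := hI.bdd_mul (hW.mono hm) hWB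
  rw [show I * (V - W) = I * V - W * I by ring]
  filter_upwards [condExp_sub hIV hWI m, condExp_stronglyMeasurable_mul_of_bound₀ hm hW hI B hWB,
    hp, hpW] with ω hsub hpull hpω hpWω
  simp only [Pi.sub_apply, Pi.mul_apply, Pi.zero_apply] at hsub hpull hpWω ⊢
  rw [hsub, hpull, ← hpω, ← hpWω, mul_comm, sub_self]

lemma isCentered_mul_mul_sub [IsFiniteMeasure μ] (hm : m ≤ m0) {I g V W p : Ω → ℝ}
    {B₁ B₂ B₃ : ℝ} (hI : AEStronglyMeasurable I μ) (hIB : ∀ᵐ ω ∂μ, ‖I ω‖ ≤ B₁)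
    (hV : Integrable V μ) (hg : AEStronglyMeasurable[m] g μ) (hgB : ∀ᵐ ω ∂μ, ‖g ω‖ ≤ B₂)
    (hW : AEStronglyMeasurable[m] W μ) (hWB : ∀ᵐ ω ∂μ, ‖W ω‖ ≤ B₃)
    (hp : p =ᵐ[μ] μ[I|m]) (hpW : p * W =ᵐ[μ] μ[I * V|m]) :
    IsCentered (fun ω => I ω * (g ω * (V ω - W ω))) μ := by
  have hres : Integrable (I * (V - W)) μ :=
    (hV.sub (.of_bound (hW.mono hm) B₃ hWB)).bdd_mul hI hIB
  have hres_condExp : μ[I * (V - W)|m] =ᵐ[μ] 0 :=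
    condExp_mul_sub_eq_zero hm (.of_bound hI B₁ hIB) (hV.bdd_mul hI hIB) hW hWB hp hpW
  rw [show (fun ω => I ω * (g ω * (V ω - W ω))) = g * (I * (V - W)) by
    ext ω; simp only [Pi.mul_apply, Pi.sub_apply]; ring]
  refine ⟨hres.bdd_mul (hg.mono hm) hgB, ?_⟩
  rw [← integral_condExp hm]
  refine integral_eq_zero_of_ae <|
    (condExp_stronglyMeasurable_mul_of_bound₀ hm hg hres B₂ hgB).trans ?_
  filter_upwards [hres_condExp] with ω hω
  simp [hω]

end Centered

lemma hasDerivAt_of_forall_abs_lt_eq {F : Type*} [NormedAddCommGroup F] [NormedSpace ℝ F]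
    {f : ℝ → F} {c : F} {r₀ : ℝ} (hr₀ : 0 < r₀) (hf : ∀ r, |r| < r₀ → f r = c) :
    HasDerivAt f 0 0 :=
  (hasDerivAt_const (0 : ℝ) c).congr_of_eventuallyEq <| by
    filter_upwards [Ioo_mem_nhds (neg_lt_zero.mpr hr₀) hr₀] with r hr
    exact hf r (abs_lt.mpr hr)

theorem dr_neyman_orthogonality_propensity_general
    {Ω 𝒵₁ 𝒵₂ : Type*} [MeasurableSpace Ω]
    [MeasurableSpace 𝒵₁] [MeasurableSpace 𝒵₂]
    (μ : Measure Ω) [IsProbabilityMeasure μ]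
    (Z1 : Ω → 𝒵₁) (Z2 : Ω → 𝒵₂) (A1 A2 : Ω → Bool) (Y : Ω → ℝ)
    (hZ1 : Measurable Z1) (hZ2 : Measurable Z2)
    (hA1 : Measurable A1) (hA2 : Measurable A2)
    (hYint : Integrable Y μ)
    (d : Bool → Bool → ℝ)
    -- true propensity scores: π1s b1 = P(A1=b1|Z1), π2s b1 b2 = P(A2=b2|A1=b1,Z1,Z2),
    -- πJ b1 = P(A1=b1|Z1,Z2)
    (π1s πJ : Bool → Ω → ℝ) (π2s : Bool → Bool → Ω → ℝ)
    (hπ1s : ∀ b1, π1s b1 =ᵐ[μ] μ[ind A1 b1 | MeasurableSpace.comap Z1 inferInstance])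
    (hπJ : ∀ b1, πJ b1 =ᵐ[μ]
      μ[ind A1 b1 | MeasurableSpace.comap (fun ω => (Z1 ω, Z2 ω)) inferInstance])
    (hπ2s : ∀ b1 b2, (fun ω => πJ b1 ω * π2s b1 b2 ω) =ᵐ[μ]
      μ[fun ω => ind A1 b1 ω * ind A2 b2 ω |
        MeasurableSpace.comap (fun ω => (Z1 ω, Z2 ω)) inferInstance])
    (hposJ : ∀ b1, ∀ᵐ ω ∂μ, 0 < πJ b1 ω)
    -- true outcome regression η2s b1 b2 = E[Y | A1=b1, A2=b2, Z1, Z2]: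
    (η2s : Bool → Bool → Ω → ℝ)
    (hη2meas : ∀ b1 b2,
      Measurable[MeasurableSpace.comap (fun ω => (Z1 ω, Z2 ω)) inferInstance] (η2s b1 b2))
    (hη2 : ∀ b1 b2, (fun ω => πJ b1 ω * π2s b1 b2 ω * η2s b1 b2 ω) =ᵐ[μ]
      μ[fun ω => ind A1 b1 ω * ind A2 b2 ω * Y ω |
        MeasurableSpace.comap (fun ω => (Z1 ω, Z2 ω)) inferInstance])
    -- true iterated mean η1s b1 b2 = E[η2s b1 b2 | A1=b1, Z1]:
    (η1s : Bool → Bool → Ω → ℝ)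
    (hη1meas : ∀ b1 b2, Measurable[MeasurableSpace.comap Z1 inferInstance] (η1s b1 b2))
    (hη1 : ∀ b1 b2, (fun ω => π1s b1 ω * η1s b1 b2 ω) =ᵐ[μ]
      μ[fun ω => ind A1 b1 ω * η2s b1 b2 ω | MeasurableSpace.comap Z1 inferInstance])
    (C : ℝ) (hη2bd : ∀ b1 b2 ω, |η2s b1 b2 ω| ≤ C) (hη1bd : ∀ b1 b2 ω, |η1s b1 b2 ω| ≤ C)
    (τ : Bool → Bool → ℝ)
    -- bounded measurable perturbations of (π1, π2):
    (δπ1 : Bool → Ω → ℝ) (δπ2 : Bool → Bool → Ω → ℝ)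
    (hδπ1meas : ∀ b1, Measurable[MeasurableSpace.comap Z1 inferInstance] (δπ1 b1))
    (hδπ2meas : ∀ b1 b2,
      Measurable[MeasurableSpace.comap (fun ω => (Z1 ω, Z2 ω)) inferInstance] (δπ2 b1 b2))
    -- the perturbed propensity scores stay bounded away from zero for small r:
    (r0 ε' : ℝ) (hr0 : 0 < r0) (hε' : 0 < ε')
    (hstay : ∀ r : ℝ, |r| < r0 → ∀ b1 b2 ω,
      ε' ≤ π1s b1 ω + r * δπ1 b1 ω ∧ ε' ≤ π2s b1 b2 ω + r * δπ2 b1 b2 ω) :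
    HasDerivAt (fun r : ℝ => ∫ ω, ((∑ b1 : Bool, ∑ b2 : Bool, d b1 b2 * (η1s b1 b2 ω - τ b1 b2)) + (∑ b2 : Bool, d (A1 ω) b2 / (π1s (A1 ω) ω + r * δπ1 (A1 ω) ω) * (η2s (A1 ω) b2 ω - η1s (A1 ω) b2 ω)) + (d (A1 ω) (A2 ω) / ((π1s (A1 ω) ω + r * δπ1 (A1 ω) ω) * (π2s (A1 ω) (A2 ω) ω + r * δπ2 (A1 ω) (A2 ω) ω)) * (Y ω - η2s (A1 ω) (A2 ω) ω))) ∂μ) 0 0 := by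
  have hm1 : MeasurableSpace.comap Z1 inferInstance ≤ ‹MeasurableSpace Ω› := hZ1.comap_le
  have hm2 : MeasurableSpace.comap (fun ω => (Z1 ω, Z2 ω)) inferInstance ≤ ‹MeasurableSpace Ω› :=
    (hZ1.prodMk hZ2).comap_le
  have hm12 : MeasurableSpace.comap Z1 inferInstance
      ≤ MeasurableSpace.comap (fun ω => (Z1 ω, Z2 ω)) inferInstance :=
    le_sup_left.trans (MeasurableSpace.comap_prodMk Z1 Z2).ge
  have hp1 : ∀ r b1, AEStronglyMeasurable[MeasurableSpace.comap Z1 inferInstance]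
      (fun ω => π1s b1 ω + r * δπ1 b1 ω) μ := fun r b1 =>
    (aestronglyMeasurable_of_ae_eq_condExp (hπ1s b1)).add
      ((hδπ1meas b1).stronglyMeasurable.aestronglyMeasurable.const_mul r)
  have hp2 : ∀ r b1 b2, AEStronglyMeasurable[MeasurableSpace.comap (fun ω => (Z1 ω, Z2 ω))
      inferInstance] (fun ω => π2s b1 b2 ω + r * δπ2 b1 b2 ω) μ := fun r b1 b2 =>
    ((aestronglyMeasurable_of_ae_eq_condExp (hπJ b1)).of_mul_left
      (aestronglyMeasurable_of_ae_eq_condExp (hπ2s b1 b2)) ((hposJ b1).mono fun _ h => h.ne')).add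
      ((hδπ2meas b1 b2).stronglyMeasurable.aestronglyMeasurable.const_mul r)
  have hterm1 : ∀ r, |r| < r0 → ∀ b1 b2, IsCentered (fun ω =>
      ind A1 b1 ω * (d b1 b2 / (π1s b1 ω + r * δπ1 b1 ω) * (η2s b1 b2 ω - η1s b1 b2 ω))) μ :=
    fun r hr b1 b2 => isCentered_mul_mul_sub hm1 (p := π1s b1)
      (measurable_ind hA1 b1).aestronglyMeasurable (.of_forall (norm_ind_le_one A1 b1))
      (.of_bound ((hη2meas b1 b2).mono hm2 le_rfl).aestronglyMeasurable C (.of_forall (hη2bd b1 b2)))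
      (aestronglyMeasurable_const.div₀ (hp1 r b1))
      (.of_forall fun ω => norm_div_le_norm_div_of_le hε' (hstay r hr b1 b2 ω).1)
      (hη1meas b1 b2).stronglyMeasurable.aestronglyMeasurable (.of_forall (hη1bd b1 b2))
      (hπ1s b1) (hη1 b1 b2)
  have hterm2 : ∀ r, |r| < r0 → ∀ b1 b2, IsCentered (fun ω =>
      ind A1 b1 ω * ind A2 b2 ω * (d b1 b2 / ((π1s b1 ω + r * δπ1 b1 ω)
        * (π2s b1 b2 ω + r * δπ2 b1 b2 ω)) * (Y ω - η2s b1 b2 ω))) μ :=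
    fun r hr b1 b2 => isCentered_mul_mul_sub hm2 (p := fun ω => πJ b1 ω * π2s b1 b2 ω)
      ((measurable_ind hA1 b1).mul (measurable_ind hA2 b2)).aestronglyMeasurable
      (.of_forall (norm_ind_mul_ind_le_one A1 A2 b1 b2)) hYint
      (aestronglyMeasurable_const.div₀ (((hp1 r b1).mono hm12).mul (hp2 r b1 b2)))
      (.of_forall fun ω => norm_div_mul_le_norm_div_of_le hε' (hstay r hr b1 b2 ω).1
        (hstay r hr b1 b2 ω).2)
      (hη2meas b1 b2).stronglyMeasurable.aestronglyMeasurable (.of_forall (hη2bd b1 b2))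
      (hπ2s b1 b2) (hη2 b1 b2)
  refine hasDerivAt_of_forall_abs_lt_eq hr0
    (c := ∫ ω, ∑ b1 : Bool, ∑ b2 : Bool, d b1 b2 * (η1s b1 b2 ω - τ b1 b2) ∂μ) fun r hr => ?_
  simp_rw [add_assoc, sum_correction_eq_sum_ind A1 A2 Y d (fun b ω => π1s b ω + r * δπ1 b ω)
    (fun b1 b2 ω => π2s b1 b2 ω + r * δπ2 b1 b2 ω)]
  exact integral_add_isCentered _ <| .sum _ fun b1 _ => .sum _ fun b2 _ =>
    (hterm1 r hr b1 b2).add (hterm2 r hr b1 b2)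

/-- Neyman orthogonality in the propensity direction: the Gateaux derivative of
`E[Ψ(θ, η*, π* + r δ_π)]` in `r` at `r = 0` vanishes, for any bounded measurable
perturbation `δ_π = (δ_π1, δ_π2)` such that the perturbed propensity scores remain
bounded away from zero for small `r`, where `η*` are the true iterated conditional
means. -/
theorem dr_neyman_orthogonality_propensity
    {Ω 𝒵₁ 𝒵₂ : Type*} [MeasurableSpace Ω]
    [MeasurableSpace 𝒵₁] [MeasurableSpace 𝒵₂]
    (μ : Measure Ω) [IsProbabilityMeasure μ]
    (Z1 : Ω → 𝒵₁) (Z2 : Ω → 𝒵₂) (A1 A2 : Ω → Bool) (Y : Ω → ℝ)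
    (hZ1 : Measurable Z1) (hZ2 : Measurable Z2)
    (hA1 : Measurable A1) (hA2 : Measurable A2)
    (hYint : Integrable Y μ)
    (d : Bool → Bool → ℝ)
    -- true propensity scores: π1s b1 = P(A1=b1|Z1), π2s b1 b2 = P(A2=b2|A1=b1,Z1,Z2),
    -- πJ b1 = P(A1=b1|Z1,Z2)
    (π1s πJ : Bool → Ω → ℝ) (π2s : Bool → Bool → Ω → ℝ) (ε : ℝ) (hε : 0 < ε) 
    (hπ1s : ∀ b1, π1s b1 =ᵐ[μ] μ[ind A1 b1 | MeasurableSpace.comap Z1 inferInstance])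
    (hπJ : ∀ b1, πJ b1 =ᵐ[μ]
      μ[ind A1 b1 | MeasurableSpace.comap (fun ω => (Z1 ω, Z2 ω)) inferInstance])
    (hπ2s : ∀ b1 b2, (fun ω => πJ b1 ω * π2s b1 b2 ω) =ᵐ[μ]
      μ[fun ω => ind A1 b1 ω * ind A2 b2 ω |
        MeasurableSpace.comap (fun ω => (Z1 ω, Z2 ω)) inferInstance])
    (hpos1 : ∀ b1, ∀ᵐ ω ∂μ, ε ≤ π1s b1 ω ∧ π1s b1 ω ≤ 1)
    (hpos2 : ∀ b1 b2, ∀ᵐ ω ∂μ, ε ≤ π2s b1 b2 ω ∧ π2s b1 b2 ω ≤ 1)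
    (hposJ : ∀ b1, ∀ᵐ ω ∂μ, 0 < πJ b1 ω)
    -- true outcome regression η2s b1 b2 = E[Y | A1=b1, A2=b2, Z1, Z2]:
    (η2s : Bool → Bool → Ω → ℝ)
    (hη2meas : ∀ b1 b2,
      Measurable[MeasurableSpace.comap (fun ω => (Z1 ω, Z2 ω)) inferInstance] (η2s b1 b2))
    (hη2 : ∀ b1 b2, (fun ω => πJ b1 ω * π2s b1 b2 ω * η2s b1 b2 ω) =ᵐ[μ]
      μ[fun ω => ind A1 b1 ω * ind A2 b2 ω * Y ω |
        MeasurableSpace.comap (fun ω => (Z1 ω, Z2 ω)) inferInstance])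
    -- true iterated mean η1s b1 b2 = E[η2s b1 b2 | A1=b1, Z1]:
    (η1s : Bool → Bool → Ω → ℝ)
    (hη1meas : ∀ b1 b2, Measurable[MeasurableSpace.comap Z1 inferInstance] (η1s b1 b2))
    (hη1 : ∀ b1 b2, (fun ω => π1s b1 ω * η1s b1 b2 ω) =ᵐ[μ]
      μ[fun ω => ind A1 b1 ω * η2s b1 b2 ω | MeasurableSpace.comap Z1 inferInstance])
    (C : ℝ) (hη2bd : ∀ b1 b2 ω, |η2s b1 b2 ω| ≤ C) (hη1bd : ∀ b1 b2 ω, |η1s b1 b2 ω| ≤ C)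
    (τ : Bool → Bool → ℝ)
    -- bounded measurable perturbations of (π1, π2):
    (δπ1 : Bool → Ω → ℝ) (δπ2 : Bool → Bool → Ω → ℝ)
    (hδπ1meas : ∀ b1, Measurable[MeasurableSpace.comap Z1 inferInstance] (δπ1 b1))
    (hδπ2meas : ∀ b1 b2,
      Measurable[MeasurableSpace.comap (fun ω => (Z1 ω, Z2 ω)) inferInstance] (δπ2 b1 b2))
    (hδπ1bd : ∀ b1 ω, |δπ1 b1 ω| ≤ C) (hδπ2bd : ∀ b1 b2 ω, |δπ2 b1 b2 ω| ≤ C)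
    -- the perturbed propensity scores stay bounded away from zero for small r:
    (r0 ε' : ℝ) (hr0 : 0 < r0) (hε' : 0 < ε')
    (hstay : ∀ r : ℝ, |r| < r0 → ∀ b1 b2 ω,
      ε' ≤ π1s b1 ω + r * δπ1 b1 ω ∧ ε' ≤ π2s b1 b2 ω + r * δπ2 b1 b2 ω) :
    HasDerivAt (fun r : ℝ => ∫ ω, ((∑ b1 : Bool, ∑ b2 : Bool, d b1 b2 * (η1s b1 b2 ω - τ b1 b2)) + (∑ b2 : Bool, d (A1 ω) b2 / (π1s (A1 ω) ω + r * δπ1 (A1 ω) ω) * (η2s (A1 ω) b2 ω - η1s (A1 ω) b2 ω)) + (d (A1 ω) (A2 ω) / ((π1s (A1 ω) ω + r * δπ1 (A1 ω) ω) * (π2s (A1 ω) (A2 ω) ω + r * δπ2 (A1 ω) (A2 ω) ω)) * (Y ω - η2s (A1 ω) (A2 ω) ω))) ∂μ) 0 0 :=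
  dr_neyman_orthogonality_propensity_general μ Z1 Z2 A1 A2 Y hZ1 hZ2 hA1 hA2 hYint d π1s πJ π2s hπ1s
    hπJ hπ2s hposJ η2s hη2meas hη2 η1s hη1meas hη1 C hη2bd hη1bd τ δπ1 δπ2 hδπ1meas hδπ2meas r0 ε'
    hr0 hε' hstay
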